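/- arXiv:1703.10540 — 4 statements merged into one kernel-verified Lean document; each statement's English description precedes it below -/
import Mathlib

section
/- Let H be Hall's universal group. Then the automorphism group Aut(H) has trivial center: the only automorphism of H commuting with all automorphisms of H is the identity. -/
/-- A subgroup generated by one element is cyclic. -/
lemma zpowers_isCyclic {H : Type} [Group H] (g : H) :
    IsCyclic ↥(Subgroup.zpowers g) := by
  refine ⟨⟨⟨g, Subgroup.mem_zpowers g⟩, ?_⟩⟩
  rintro ⟨x, k, rfl⟩
  exact ⟨k, by ext; simp⟩

/-- **`Aut(H)` has trivial center.**
If `H` is Hall's universal group (countable, locally finite, embedding every finite group,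
homogeneous for finite subgroups), then the only automorphism of `H` commuting with all
automorphisms of `H` is the identity. -/
theorem aut_hall_center_trivial
    {H : Type} [Group H] [Countable H]
    (hLF : ∀ s : Finset H, ((Subgroup.closure (s : Set H) : Subgroup H) : Set H).Finite)
    (hEmb : ∀ (G : Type) [Group G] [Finite G], ∃ e : G →* H, Function.Injective e)
    (hHom : ∀ K L : Subgroup H, (K : Set H).Finite → (L : Set H).Finite →
      ∀ φ : ↥K ≃* ↥L, ∃ h : H, ∀ k : K, (φ k : H) = h * (k : H) * h⁻¹) :
    ∀ f : MulAut H, (∀ g : MulAut H, f * g = g * f) → f = 1 := by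
  -- Every element of `H` has finite order.
  have hfin : ∀ z : H, IsOfFinOrder z := by
    intro z
    have h1 : (Subgroup.closure ({z} : Set H) : Set H).Finite := by
      simpa using hLF {z}
    rw [← Subgroup.zpowers_eq_closure] at h1
    haveI : Finite ↥(Subgroup.zpowers z) := h1.to_subtype
    have := isOfFinOrder_of_finite (⟨z, Subgroup.mem_zpowers z⟩ : Subgroup.zpowers z)
    rwa [← orderOf_pos_iff, Subgroup.orderOf_mk, orderOf_pos_iff] at this
  -- Step 1: the center of `H` is trivial.
  have hZ : ∀ z : H, (∀ x : H, z * x = x * z) → z = 1 := by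
    intro z hz
    set n := orderOf z with hn
    haveI : NeZero n := ⟨(hfin z).orderOf_pos.ne'⟩
    obtain ⟨e, he⟩ := hEmb (Multiplicative (ZMod n) × Multiplicative (ZMod n))
    set x : Multiplicative (ZMod n) × Multiplicative (ZMod n) :=
      (Multiplicative.ofAdd (1 : ZMod n), 1) with hx
    set y : Multiplicative (ZMod n) × Multiplicative (ZMod n) :=
      (1, Multiplicative.ofAdd (1 : ZMod n)) with hy
    have hxord : orderOf x = n := by
      rw [hx, Prod.orderOf]
      simp [orderOf_ofAdd_eq_addOrderOf, ZMod.addOrderOf_one]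
    have hyord : orderOf y = n := by
      rw [hy, Prod.orderOf]
      simp [orderOf_ofAdd_eq_addOrderOf, ZMod.addOrderOf_one]
    -- the central element `z` lies in the cyclic group generated by `e w`
    -- for any `w` of order `n`
    have key : ∀ w : Multiplicative (ZMod n) × Multiplicative (ZMod n),
        orderOf w = n → z ∈ Subgroup.zpowers (e w) := by
      intro w hword
      set a : H := e w with ha
      have haord : orderOf a = n := by rw [ha, orderOf_injective e he, hword]
      have hKfin : ((Subgroup.closure ({z} : Set H) : Subgroup H) : Set H).Finite := by
        simpa using hLF {z}
      have hLfin : ((Subgroup.closure ({a} : Set H) : Subgroup H) : Set H).Finite := by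
        simpa using hLF {a}
      rw [← Subgroup.zpowers_eq_closure] at hKfin hLfin
      haveI := zpowers_isCyclic z
      haveI := zpowers_isCyclic a
      have hcard : Nat.card ↥(Subgroup.zpowers z) = Nat.card ↥(Subgroup.zpowers a) := by
        rw [Nat.card_zpowers, Nat.card_zpowers, haord]
      let φ : ↥(Subgroup.zpowers z) ≃* ↥(Subgroup.zpowers a) := mulEquivOfCyclicCardEq hcard
      obtain ⟨h, hh⟩ := hHom (Subgroup.zpowers z) (Subgroup.zpowers a) hKfin hLfin φ
      have h1 := hh ⟨z, Subgroup.mem_zpowers z⟩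
      have hconj : h * z * h⁻¹ = z := by
        rw [← hz h]
        exact mul_inv_cancel_right z h
      rw [hconj] at h1
      exact h1 ▸ (φ ⟨z, Subgroup.mem_zpowers z⟩).2
    obtain ⟨i, hi⟩ := key x hxord
    obtain ⟨j, hj⟩ := key y hyord
    have hi' : e (x ^ i) = z := by simpa [map_zpow] using hi
    have hj' : e (y ^ j) = z := by simpa [map_zpow] using hj
    have hxy : x ^ i = y ^ j := he (hi'.trans hj'.symm)
    have hfst : (Multiplicative.ofAdd (1 : ZMod n)) ^ i = 1 := by
      have := congrArg Prod.fst hxy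
      simpa [hx, hy] using this
    have hxi : x ^ i = 1 := by
      rw [hx, Prod.pow_def]
      simp [hfst]
    rw [← hi', hxi, map_one]
  -- Step 2: a central automorphism fixes every element.
  intro f hf
  have hfix : ∀ h : H, f h = h := by
    intro h
    have hc := hf (MulAut.conj h)
    have hc' : ∀ x : H, f (h * x * h⁻¹) = h * f x * h⁻¹ := by
      intro x
      have := congrArg (fun ψ : MulAut H => ψ x) hc
      simpa [MulAut.conj] using this
    -- hence h⁻¹ * f h is central
    have hcomm : ∀ y : H, (h⁻¹ * f h) * y = y * (h⁻¹ * f h) := by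
      intro y
      obtain ⟨x, rfl⟩ := f.surjective y
      have := hc' x
      rw [map_mul, map_mul] at this
      -- f h * f x * (f h)⁻¹ = h * f x * h⁻¹
      have h2 : f h * f x * (f h)⁻¹ = h * f x * h⁻¹ := by
        simpa [mul_assoc] using this
      -- rearrange
      have h3 : h⁻¹ * (f h * f x) = (f x * h⁻¹) * f h := by
        have := congrArg (fun t => h⁻¹ * t * f h) h2
        simpa [mul_assoc] using this
      calc (h⁻¹ * f h) * f x = h⁻¹ * (f h * f x) := by rw [mul_assoc]
        _ = f x * h⁻¹ * f h := h3
        _ = f x * (h⁻¹ * f h) := by rw [mul_assoc]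
    have := hZ (h⁻¹ * f h) hcomm
    have : f h = h := by
      have h4 := congrArg (fun t => h * t) this
      simpa using h4
    exact this
  ext x
  simpa using hfix x
end

section
/- Let H be Hall's universal group. Then every automorphism of the group Aut(H) is inner: for every group automorphism F of Aut(H) there exists g ∈ Aut(H) such that F(h) = g h g⁻¹ for all h ∈ Aut(H). -/
open Subgroup Equiv

namespace HallAux



private def addLeftHom (R : Type*) [AddGroup R] : Multiplicative R →* Equiv.Perm R where
  toFun x := Equiv.addLeft x.toAdd
  map_one' := by ext z; simp
  map_mul' x y := by ext z; simp [add_assoc]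

private lemma addLeftHom_inj (R : Type*) [AddGroup R] : Function.Injective (addLeftHom R) := by
  intro a b hab
  have := congrArg (fun (f : Equiv.Perm R) => f 0) hab
  simpa [addLeftHom] using this

lemma orderOf_addLeft {R : Type*} [AddGroup R] (a : R) :
    orderOf (Equiv.addLeft a) = addOrderOf a :=
  (orderOf_injective (addLeftHom R) (addLeftHom_inj R) (Multiplicative.ofAdd a)).trans rfl

lemma isCyclic_zpowers {G : Type*} [Group G] (a : G) : IsCyclic ↥(Subgroup.zpowers a) := by
  refine ⟨⟨⟨a, mem_zpowers a⟩, fun x => ?_⟩⟩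
  obtain ⟨k, hk⟩ := mem_zpowers_iff.mp x.2
  exact mem_zpowers_iff.mpr ⟨k, Subtype.ext (by simpa using hk)⟩

variable {H : Type} [Group H]

section

variable (hLF : ∀ s : Finset H, ((Subgroup.closure (s : Set H) : Subgroup H) : Set H).Finite)

include hLF

lemma zpowers_finite (x : H) : ((Subgroup.zpowers x : Subgroup H) : Set H).Finite := by
  have := hLF {x}
  simpa [← Subgroup.zpowers_eq_closure] using this

lemma orderOf_pos' (x : H) : 0 < orderOf x := by
  have h := zpowers_finite hLF x
  haveI : Finite ↥(Subgroup.zpowers x) := h.to_subtype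
  rw [← Nat.card_zpowers]
  exact Nat.card_pos

variable (hHom : ∀ K L : Subgroup H, (K : Set H).Finite → (L : Set H).Finite →
      ∀ φ : ↥K ≃* ↥L, ∃ h : H, ∀ k : K, (φ k : H) = h * (k : H) * h⁻¹)

include hHom

/-- transfer: if `N` is normal containing `x`, any `y` of the same order lies in `N`. -/
lemma mem_of_orderOf_eq {N : Subgroup H} (hN : N.Normal) {x y : H}
    (hx : x ∈ N) (hxy : orderOf y = orderOf x) : y ∈ N := by
  haveI := isCyclic_zpowers x
  haveI := isCyclic_zpowers y
  have hcard : Nat.card ↥(Subgroup.zpowers y) = Nat.card ↥(Subgroup.zpowers x) := by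
    rw [Nat.card_zpowers, Nat.card_zpowers, hxy]
  obtain ⟨h, hh⟩ := hHom _ _ (zpowers_finite hLF y) (zpowers_finite hLF x)
    (mulEquivOfCyclicCardEq hcard)
  have h1 := hh ⟨y, mem_zpowers y⟩
  have h2 : ((mulEquivOfCyclicCardEq hcard) ⟨y, mem_zpowers y⟩ : H) ∈ N :=
    Subgroup.zpowers_le.mpr hx
      ((mulEquivOfCyclicCardEq hcard) ⟨y, mem_zpowers y⟩).2
  rw [h1] at h2
  have h3 := hN.conj_mem _ h2 h⁻¹
  have : h⁻¹ * (h * y * h⁻¹) * h⁻¹⁻¹ = y := by group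
  rwa [this] at h3

end



variable {n : ℕ}

private lemma zmod_facts (hn : 3 ≤ n) :
    (1 : ZMod n) ≠ 0 ∧ (2 : ZMod n) ≠ 0 ∧ (2 : ZMod n) ≠ 1 := by
  haveI : NeZero n := ⟨by omega⟩
  have hdvd : ∀ m : ℕ, 0 < m → m < n → (m : ZMod n) ≠ 0 := by
    intro m hm hmn h
    rw [ZMod.natCast_eq_zero_iff] at h
    exact absurd (Nat.le_of_dvd hm h) (by omega)
  refine ⟨by simpa using hdvd 1 (by omega) (by omega),
    by simpa using hdvd 2 (by omega) (by omega), fun h => ?_⟩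
  exact (by simpa using hdvd 1 (by omega) (by omega) : (1 : ZMod n) ≠ 0)
    (by linear_combination h)

private lemma sigma3_apply (hn : 3 ≤ n) :
    ∀ x : ZMod n, (Equiv.swap 1 2) ((Equiv.swap 0 1) x) =
      if x = 0 then 2 else if x = 1 then 0 else if x = 2 then 1 else x := by
  classical
  obtain ⟨h10, h20, h21⟩ := zmod_facts hn
  intro x
  by_cases hx0 : x = 0
  · subst hx0
    rw [if_pos rfl, Equiv.swap_apply_left, Equiv.swap_apply_left]
  · rw [if_neg hx0]
    by_cases hx1 : x = 1
    · subst hx1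
      rw [if_pos rfl, Equiv.swap_apply_right,
        Equiv.swap_apply_of_ne_of_ne (Ne.symm h10) (Ne.symm h20)]
    · rw [if_neg hx1]
      by_cases hx2 : x = 2
      · subst hx2
        rw [if_pos rfl, Equiv.swap_apply_of_ne_of_ne h20 h21, Equiv.swap_apply_right]
      · rw [if_neg hx2, Equiv.swap_apply_of_ne_of_ne hx0 hx1,
          Equiv.swap_apply_of_ne_of_ne hx1 hx2]

private lemma sigma3_orderOf (hn : 3 ≤ n) :
    orderOf (Equiv.swap 1 2 * Equiv.swap 0 1 : Perm (ZMod n)) = 3 := by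
  classical
  obtain ⟨h10, h20, h21⟩ := zmod_facts hn
  haveI : Fact (Nat.Prime 3) := ⟨by norm_num⟩
  have happ := sigma3_apply hn
  refine orderOf_eq_prime ?_ ?_
  · ext x
    have h3 : (Equiv.swap 1 2 * Equiv.swap 0 1 : Perm (ZMod n)) ^ 3 =
        (Equiv.swap 1 2 * Equiv.swap 0 1) * (Equiv.swap 1 2 * Equiv.swap 0 1) *
          (Equiv.swap 1 2 * Equiv.swap 0 1) := by
      rw [pow_succ, pow_two]
    rw [h3]
    simp only [Perm.mul_apply, Perm.one_apply]
    by_cases hx0 : x = 0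
    · subst hx0
      rw [happ 0, if_pos rfl, happ 2, if_neg h20, if_neg h21, if_pos rfl,
        happ 1, if_neg h10, if_pos rfl]
    · by_cases hx1 : x = 1
      · subst hx1
        rw [happ 1, if_neg h10, if_pos rfl, happ 0, if_pos rfl,
          happ 2, if_neg h20, if_neg h21, if_pos rfl]
      · by_cases hx2 : x = 2
        · subst hx2
          rw [happ 2, if_neg h20, if_neg h21, if_pos rfl,
            happ 1, if_neg h10, if_pos rfl, happ 0, if_pos rfl]
        · rw [happ x, if_neg hx0, if_neg hx1, if_neg hx2, happ x,
            if_neg hx0, if_neg hx1, if_neg hx2, happ x, if_neg hx0, if_neg hx1, if_neg hx2]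
  · intro h
    have h0 := congrArg (fun f : Perm (ZMod n) => f 0) h
    simp only [Perm.mul_apply, Perm.one_apply] at h0
    rw [happ 0, if_pos rfl] at h0
    exact h20 h0

/-- the key conjugation identity: `σ₃ = c₁ * (g * c₁ * g⁻¹)`. -/
private lemma key_conj (hn : 3 ≤ n) :
    (Equiv.addLeft 1 : Perm (ZMod n)) *
      ((Equiv.swap 0 1 * Equiv.subLeft 1) * Equiv.addLeft 1 *
        (Equiv.swap 0 1 * Equiv.subLeft 1)⁻¹) =
    (Equiv.swap 1 2 * Equiv.swap 0 1 : Perm (ZMod n)) := by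
  classical
  obtain ⟨h10, h20, h21⟩ := zmod_facts hn
  have hm10 : (-1 : ZMod n) ≠ 0 := fun h => h10 (neg_eq_zero.mp h)
  have hm11 : (-1 : ZMod n) ≠ 1 := by
    intro h
    exact h20 (by rw [show (2 : ZMod n) = 1 - (-1) by ring, h]; ring)
  have hsub_inv : (Equiv.subLeft (1 : ZMod n))⁻¹ = Equiv.subLeft 1 := by
    rw [inv_eq_iff_mul_eq_one]
    ext z
    simp [Perm.mul_apply]
  have happ := sigma3_apply hn
  ext x
  rw [mul_inv_rev, hsub_inv, Equiv.swap_inv]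
  simp only [Perm.mul_apply, Equiv.coe_addLeft, Equiv.subLeft_apply]
  rw [happ x]
  by_cases hx0 : x = 0
  · subst hx0
    rw [if_pos rfl, Equiv.swap_apply_left]
    rw [show (1 : ZMod n) - (1 + (1 - 1)) = 0 by ring, Equiv.swap_apply_left]
    exact (one_add_one_eq_two)
  · rw [if_neg hx0]
    by_cases hx1 : x = 1
    · subst hx1
      rw [if_pos rfl, Equiv.swap_apply_right]
      rw [show (1 : ZMod n) - (1 + (1 - 0)) = -1 by ring,
        Equiv.swap_apply_of_ne_of_ne hm10 hm11]
      ring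
    · rw [if_neg hx1]
      by_cases hx2 : x = 2
      · subst hx2
        rw [if_pos rfl, Equiv.swap_apply_of_ne_of_ne h20 h21]
        rw [show (1 : ZMod n) - (1 + (1 - 2)) = 1 by ring, Equiv.swap_apply_right]
        ring
      · rw [if_neg hx2, Equiv.swap_apply_of_ne_of_ne hx0 hx1]
        have hne0 : (1 : ZMod n) - (1 + (1 - x)) ≠ 0 := by
          intro h; exact hx1 (by linear_combination h)
        have hne1 : (1 : ZMod n) - (1 + (1 - x)) ≠ 1 := by
          intro h; exact hx2 (by linear_combination h)
        rw [Equiv.swap_apply_of_ne_of_ne hne0 hne1]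
        ring



section
variable (hLF : ∀ s : Finset H, ((Subgroup.closure (s : Set H) : Subgroup H) : Set H).Finite)
  (hEmb : ∀ (G : Type) [Group G] [Finite G], ∃ e : G →* H, Function.Injective e)
  (hHom : ∀ K L : Subgroup H, (K : Set H).Finite → (L : Set H).Finite →
      ∀ φ : ↥K ≃* ↥L, ∃ h : H, ∀ k : K, (φ k : H) = h * (k : H) * h⁻¹)

include hLF hEmb hHom in
theorem normal_eq_top {N : Subgroup H} (hN : N.Normal) (hne : N ≠ ⊥) : N = ⊤ := by
  classical
  -- pick a nontrivial element of N
  have hx : ∃ x ∈ N, x ≠ 1 := by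
    by_contra hc
    push_neg at hc
    exact hne ((Subgroup.eq_bot_iff_forall N).mpr hc)
  obtain ⟨x, hxN, hx1⟩ := hx
  set n := orderOf x with hn
  have hnpos : 0 < n := orderOf_pos' hLF x
  have hn1 : n ≠ 1 := fun h => hx1 (orderOf_eq_one_iff.mp h)
  -- Step 1 : N contains an element of order 2
  have step2 : ∃ z ∈ N, orderOf z = 2 := by
    -- first produce an element of order 3 if n ≠ 2
    have step3 : (∃ w ∈ N, orderOf w = 3) ∨ ∃ z ∈ N, orderOf z = 2 := by
      by_cases hn2 : n = 2
      · exact Or.inr ⟨x, hxN, hn ▸ hn2 ▸ rfl⟩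
      · have hn3 : 3 ≤ n := by omega
        haveI : NeZero n := ⟨by omega⟩
        obtain ⟨e, he⟩ := hEmb (Perm (ZMod n))
        have hc1 : orderOf (Equiv.addLeft (1 : ZMod n)) = n := by
          rw [orderOf_addLeft, ZMod.addOrderOf_one]
        have hcN : e (Equiv.addLeft 1) ∈ N :=
          mem_of_orderOf_eq hLF hHom hN hxN (by rw [orderOf_injective e he, hc1])
        have hσN : e (Equiv.swap 1 2 * Equiv.swap 0 1) ∈ N := by
          rw [← key_conj hn3]
          simp only [map_mul, map_inv]
          exact mul_mem hcN (hN.conj_mem _ hcN _)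
        refine Or.inl ⟨e (Equiv.swap 1 2 * Equiv.swap 0 1), hσN, ?_⟩
        rw [orderOf_injective e he, sigma3_orderOf hn3]
    rcases step3 with ⟨w, hwN, hw3⟩ | h2
    · -- use A₄-gadget: product of two elements of order 3 having order 2
      obtain ⟨e2, he2⟩ := hEmb (Perm (Fin 4))
      haveI : Fact (Nat.Prime 3) := ⟨by norm_num⟩
      haveI : Fact (Nat.Prime 2) := ⟨by norm_num⟩
      set a : Perm (Fin 4) := Equiv.swap 0 1 * Equiv.swap 1 2 with ha
      set b : Perm (Fin 4) := Equiv.swap 1 2 * Equiv.swap 2 3 with hb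
      have hoa : orderOf a = 3 := orderOf_eq_prime (by decide) (by decide)
      have hob : orderOf b = 3 := orderOf_eq_prime (by decide) (by decide)
      have hoab : orderOf (a * b) = 2 := orderOf_eq_prime (by decide) (by decide)
      have haN : e2 a ∈ N :=
        mem_of_orderOf_eq hLF hHom hN hwN (by rw [orderOf_injective e2 he2, hoa, hw3])
      have hbN : e2 b ∈ N :=
        mem_of_orderOf_eq hLF hHom hN hwN (by rw [orderOf_injective e2 he2, hob, hw3])
      refine ⟨e2 (a * b), by rw [map_mul]; exact mul_mem haN hbN, ?_⟩
      rw [orderOf_injective e2 he2, hoab]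
    · exact h2
  obtain ⟨z, hzN, hz2⟩ := step2
  -- Step 2 : every element of H lies in N
  rw [Subgroup.eq_top_iff']
  intro y
  rcases eq_or_ne y 1 with rfl | hy1
  · exact one_mem N
  set m := orderOf y with hm
  have hmpos : 0 < m := orderOf_pos' hLF y
  haveI : NeZero m := ⟨by omega⟩
  obtain ⟨e3, he3⟩ := hEmb (Perm (ZMod m))
  have hτ : orderOf (Equiv.addLeft (1 : ZMod m)) = m := by
    rw [orderOf_addLeft, ZMod.addOrderOf_one]
  -- every permutation is in the closure of order-2 elements
  have hclos : (Equiv.addLeft (1 : ZMod m)) ∈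
      Subgroup.closure {σ : Perm (ZMod m) | orderOf σ = 2} := by
    have h1 : Subgroup.closure {σ : Perm (ZMod m) | σ.IsSwap} ≤
        Subgroup.closure {σ : Perm (ZMod m) | orderOf σ = 2} := by
      apply Subgroup.closure_mono
      rintro σ ⟨u, v, huv, rfl⟩
      haveI : Fact (Nat.Prime 2) := ⟨by norm_num⟩
      exact orderOf_eq_prime (Equiv.swap_mul_self u v) (fun h => huv (Equiv.swap_eq_one_iff.mp h))
    have h2 := Equiv.Perm.closure_isSwap (α := ZMod m)
    exact h1 (h2 ▸ Subgroup.mem_top _)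
  -- push into H
  have himg : e3 (Equiv.addLeft 1) ∈ N := by
    have hmap := Subgroup.mem_map_of_mem e3 hclos
    rw [MonoidHom.map_closure] at hmap
    refine Subgroup.closure_le N |>.mpr ?_ hmap
    rintro _ ⟨σ, hσ, rfl⟩
    exact mem_of_orderOf_eq hLF hHom hN hzN (by rw [orderOf_injective e3 he3, hσ, hz2])
  exact mem_of_orderOf_eq hLF hHom hN himg (by rw [orderOf_injective e3 he3, hτ, hm])


include hLF hEmb hHom in
theorem aut_inner (F : MulAut (MulAut H)) :
    ∃ g : MulAut H, ∀ h : MulAut H, F h = g * h * g⁻¹ := by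
  classical
  -- H is nonabelian and nontrivial
  obtain ⟨e3, he3⟩ := hEmb (Perm (Fin 3))
  have hnab : ∃ a b : H, a * b ≠ b * a := by
    refine ⟨e3 (Equiv.swap 0 1), e3 (Equiv.swap 0 2), fun h => ?_⟩
    rw [← map_mul, ← map_mul] at h
    exact (by decide : (Equiv.swap 0 1 * Equiv.swap 0 2 : Perm (Fin 3)) ≠
      Equiv.swap 0 2 * Equiv.swap 0 1) (he3 h)
  have hnt : ∃ w : H, w ≠ 1 := by
    refine ⟨e3 (Equiv.swap 0 1), fun h => ?_⟩
    rw [← map_one e3] at h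
    exact (by decide : (Equiv.swap 0 1 : Perm (Fin 3)) ≠ 1) (he3 h)
  -- trivial center
  have hcent : Subgroup.center H = ⊥ := by
    by_contra hc
    have htop := normal_eq_top hLF hEmb hHom (N := Subgroup.center H) inferInstance hc
    obtain ⟨a, b, hab⟩ := hnab
    exact hab ((Subgroup.mem_center_iff.mp (htop ▸ Subgroup.mem_top a)) b).symm
  have conj_inj : Function.Injective (MulAut.conj : H →* MulAut H) := by
    rw [injective_iff_map_eq_one]
    intro w hw
    have hz : w ∈ Subgroup.center H := by
      rw [Subgroup.mem_center_iff]
      intro g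
      have := congrArg (fun f : MulAut H => f g) hw
      simp only [MulAut.conj_apply, MulAut.one_apply] at this
      calc g * w = (w * g * w⁻¹) * w := by rw [this]
      _ = w * g := by group
    rw [hcent] at hz
    exact hz
  set cj := (MulAut.conj : H →* MulAut H) with hcj
  set I : Subgroup (MulAut H) := cj.range with hI
  have key : ∀ (f : MulAut H) (x : H), f * cj x * f⁻¹ = cj (f x) := by
    intro f x
    ext h
    simp only [MulAut.mul_apply, MulAut.conj_apply, MulAut.inv_def, map_mul, map_inv,
      MulEquiv.apply_symm_apply, hcj]
  have hInorm : I.Normal := by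
    constructor
    rintro _ ⟨x, rfl⟩ g
    rw [key]
    exact ⟨g x, rfl⟩
  -- the centralizer of I is trivial
  have hcentralizer : ∀ j : MulAut H, (∀ x : H, j * cj x * j⁻¹ = cj x) → j = 1 := by
    intro j hj
    have : ∀ x : H, j x = x := by
      intro x
      apply conj_inj
      rw [← key j x, hj x]
    exact MulEquiv.ext this
  -- every automorphism of MulAut H maps I into I
  have step : ∀ F' : MulAut (MulAut H), I ≤ Subgroup.map F'.toMonoidHom I := by
    intro F'
    set J := Subgroup.map F'.toMonoidHom I with hJ
    have hJnorm : J.Normal := by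
      constructor
      rintro _ ⟨i, hi, rfl⟩ g
      refine ⟨F'.symm g * i * (F'.symm g)⁻¹, hInorm.conj_mem i hi _, ?_⟩
      simp only [map_mul, map_inv, MulEquiv.coe_toMonoidHom, MulEquiv.apply_symm_apply]
    have hKnorm : (I ⊓ J).Normal :=
      ⟨fun p hp g => ⟨hInorm.conj_mem p hp.1 g, hJnorm.conj_mem p hp.2 g⟩⟩
    have hMnorm : (Subgroup.comap cj (I ⊓ J)).Normal := hKnorm.comap cj
    rcases eq_or_ne (Subgroup.comap cj (I ⊓ J)) ⊥ with hbot | hne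
    · -- then I ⊓ J = ⊥, hence J centralizes I, hence J = ⊥ : contradiction
      exfalso
      have hIJbot : I ⊓ J = ⊥ := by
        have := Subgroup.map_comap_eq_self (f := cj) (H := I ⊓ J)
          (le_trans inf_le_left (le_of_eq rfl))
        rw [hbot, Subgroup.map_bot] at this
        exact this.symm
      have hJbot : ∀ j ∈ J, j = 1 := by
        intro j hj
        apply hcentralizer
        intro x
        have hcomm : j * cj x * j⁻¹ * (cj x)⁻¹ = 1 := by
          have hmem1 : j * cj x * j⁻¹ * (cj x)⁻¹ ∈ I := by
            refine mul_mem ?_ (inv_mem ⟨x, rfl⟩)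
            exact hInorm.conj_mem (cj x) ⟨x, rfl⟩ j
          have hmem2 : j * cj x * j⁻¹ * (cj x)⁻¹ ∈ J := by
            have h1 : cj x * j⁻¹ * (cj x)⁻¹ ∈ J := hJnorm.conj_mem j⁻¹ (inv_mem hj) (cj x)
            have h2 := mul_mem hj h1
            have : j * (cj x * j⁻¹ * (cj x)⁻¹) = j * cj x * j⁻¹ * (cj x)⁻¹ := by group
            rwa [this] at h2
          have : j * cj x * j⁻¹ * (cj x)⁻¹ ∈ I ⊓ J := ⟨hmem1, hmem2⟩
          rwa [hIJbot, Subgroup.mem_bot] at this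
        have := mul_eq_one_iff_eq_inv.mp hcomm
        rw [this]
        group
      obtain ⟨w, hw⟩ := hnt
      have : F'.toMonoidHom (cj w) ∈ J := Subgroup.mem_map_of_mem _ ⟨w, rfl⟩
      have h1 : cj w = 1 := by
        have h2 := hJbot _ this
        have h3 : F' (cj w) = 1 := h2
        have := congrArg F'.symm h3
        rw [MulEquiv.symm_apply_apply, map_one] at this
        exact this
      exact hw (conj_inj (by rw [h1, map_one]))
    · -- then comap = ⊤, hence I ≤ J
      have htop := normal_eq_top hLF hEmb hHom hMnorm hne
      have : I ⊓ J = I := by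
        have h1 := Subgroup.map_comap_eq_self (f := cj) (H := I ⊓ J)
          (le_trans inf_le_left (le_of_eq rfl))
        rw [htop, ← MonoidHom.range_eq_map] at h1
        exact h1.symm ▸ rfl
      calc I = I ⊓ J := this.symm
      _ ≤ J := inf_le_right
  -- I is invariant under every automorphism of MulAut H
  have hFI : ∀ F' : MulAut (MulAut H), ∀ i ∈ I, F' i ∈ I := by
    intro F' i hi
    have h1 : i ∈ Subgroup.map (F'⁻¹).toMonoidHom I := step F'⁻¹ hi
    obtain ⟨i', hi', hii⟩ := h1
    have : F' i = i' := by
      have : (F'⁻¹).toMonoidHom i' = F'.symm i' := rfl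
      rw [this] at hii
      rw [← hii, MulEquiv.apply_symm_apply]
    rw [this]
    exact hi'
  -- construct the automorphism of H induced by F on I ≅ H
  have hex : ∀ (F' : MulAut (MulAut H)) (x : H), ∃ y : H, cj y = F' (cj x) := by
    intro F' x
    have : F' (cj x) ∈ I := hFI F' (cj x) ⟨x, rfl⟩
    obtain ⟨y, hy⟩ := this
    exact ⟨y, hy⟩
  choose af haf using hex F
  choose bf hbf using hex F⁻¹
  have hba : ∀ x, bf (af x) = x := by
    intro x
    apply conj_inj
    rw [hbf, haf]
    show F.symm (F (cj x)) = cj x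
    rw [MulEquiv.symm_apply_apply]
  have hab : ∀ x, af (bf x) = x := by
    intro x
    apply conj_inj
    rw [haf, hbf]
    show F (F.symm (cj x)) = cj x
    rw [MulEquiv.apply_symm_apply]
  have hafmul : ∀ x y, af (x * y) = af x * af y := by
    intro x y
    apply conj_inj
    rw [map_mul, haf, map_mul cj, haf, haf, map_mul]
  set g : MulAut H :=
    { toFun := af, invFun := bf, left_inv := hba, right_inv := hab,
      map_mul' := hafmul } with hg
  refine ⟨g, fun h => ?_⟩
  have hcomm : ∀ x, af (h x) = (F h) (af x) := by
    intro x
    apply conj_inj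
    calc cj (af (h x)) = F (cj (h x)) := haf (h x)
    _ = F (h * cj x * h⁻¹) := by rw [key h x]
    _ = F h * F (cj x) * (F h)⁻¹ := by rw [map_mul, map_mul, map_inv]
    _ = F h * cj (af x) * (F h)⁻¹ := by rw [haf]
    _ = cj ((F h) (af x)) := key (F h) (af x)
  apply MulEquiv.ext
  intro x
  show F h x = g (h (g⁻¹ x))
  have hg_inv : g⁻¹ x = bf x := rfl
  rw [hg_inv]
  show F h x = af (h (bf x))
  rw [hcomm (bf x), hab]

end

end HallAux



/-- **Every automorphism of `Aut(H)` is inner.**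
If `H` is Hall's universal group (countable, locally finite, embedding every finite group,
homogeneous for finite subgroups), then for every group automorphism `F` of `Aut(H)` there
exists `g ∈ Aut(H)` such that `F h = g * h * g⁻¹` for all `h ∈ Aut(H)`. -/
theorem aut_hall_automorphisms_inner
    {H : Type} [Group H] [Countable H]
    (hLF : ∀ s : Finset H, ((Subgroup.closure (s : Set H) : Subgroup H) : Set H).Finite)
    (hEmb : ∀ (G : Type) [Group G] [Finite G], ∃ e : G →* H, Function.Injective e)
    (hHom : ∀ K L : Subgroup H, (K : Set H).Finite → (L : Set H).Finite →
      ∀ φ : ↥K ≃* ↥L, ∃ h : H, ∀ k : K, (φ k : H) = h * (k : H) * h⁻¹) :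
    ∀ F : MulAut (MulAut H), ∃ g : MulAut H, ∀ h : MulAut H, F h = g * h * g⁻¹ := by
  intro F
  exact HallAux.aut_inner hLF hEmb hHom F
end

section
/- Let H be Hall's universal group and let K₀ be a nontrivial finite subgroup of H. Then there exists a finite subgroup K₁ of H with K₀ ≤ K₁ such that K₁ is isomorphic to the alternating group on 2·|K₀| letters. -/
/-- `permCongr` as a `MulEquiv`. -/
def permCongrMulEquiv {α β : Type*} (e : α ≃ β) : Equiv.Perm α ≃* Equiv.Perm β :=
  { Equiv.permCongr e with
    map_mul' := fun p q => by
      ext x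
      simp [Equiv.permCongr_apply] }

/-- The diagonal embedding of `Perm α` into even permutations of `α ⊕ α`. -/
def diagPerm (α : Type*) : Equiv.Perm α →* Equiv.Perm (α ⊕ α) :=
  (Equiv.Perm.sumCongrHom α α).comp ((MonoidHom.id _).prod (MonoidHom.id _))

theorem diagPerm_sign {α : Type*} [DecidableEq α] [Fintype α] (σ : Equiv.Perm α) :
    Equiv.Perm.sign (diagPerm α σ) = 1 := by
  simp [diagPerm, Equiv.Perm.sumCongrHom, Equiv.Perm.sign_sumCongr, Int.units_mul_self]

theorem diagPerm_injective (α : Type*) : Function.Injective (diagPerm α) := by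
  intro σ τ h
  ext x
  have := congrArg (fun p : Equiv.Perm (α ⊕ α) => p (Sum.inl x)) h
  simpa [diagPerm, Equiv.Perm.sumCongrHom] using this

/-- Every finite group embeds into the alternating group on twice its cardinality. -/
theorem exists_injective_monoidHom_alternating {α : Type} [Group α] [Fintype α]
    [DecidableEq α] :
    ∃ f : α →* alternatingGroup (Fin (2 * Nat.card α)), Function.Injective f := by
  classical
  have hcard : Fintype.card (α ⊕ α) = Fintype.card (Fin (2 * Nat.card α)) := by
    simp [Nat.card_eq_fintype_card, two_mul]
  let e : (α ⊕ α) ≃ Fin (2 * Nat.card α) := Fintype.equivOfCardEq hcard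
  let c : α →* Equiv.Perm α := MulAction.toPermHom α α
  have hc : Function.Injective c := MulAction.toPerm_injective
  let big : α →* Equiv.Perm (Fin (2 * Nat.card α)) :=
    (permCongrMulEquiv e).toMonoidHom.comp ((diagPerm α).comp c)
  have hsign : ∀ a : α, Equiv.Perm.sign (big a) = 1 := by
    intro a
    show Equiv.Perm.sign (e.permCongr (diagPerm α (c a))) = 1
    rw [Equiv.Perm.sign_permCongr]
    exact diagPerm_sign _
  refine ⟨big.codRestrict (alternatingGroup _)
    (fun a => Equiv.Perm.mem_alternatingGroup.2 (hsign a)), ?_⟩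
  intro a b h
  have : big a = big b := congrArg Subtype.val h
  exact hc (diagPerm_injective α ((permCongrMulEquiv e).injective this))

/-- **Embedding a finite subgroup of Hall's group into a copy of an alternating group.**
If `H` is Hall's universal group and `K₀` is a nontrivial finite subgroup of `H`, then there
is a finite subgroup `K₁` of `H` containing `K₀` which is isomorphic to the alternating
group on `2 * |K₀|` letters. -/
theorem exists_alternating_overgroup
    {H : Type} [Group H] [Countable H]
    (hLF : ∀ s : Finset H, ((Subgroup.closure (s : Set H) : Subgroup H) : Set H).Finite)
    (hEmb : ∀ (G : Type) [Group G] [Finite G], ∃ e : G →* H, Function.Injective e)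
    (hHom : ∀ K L : Subgroup H, (K : Set H).Finite → (L : Set H).Finite →
      ∀ φ : ↥K ≃* ↥L, ∃ h : H, ∀ k : K, (φ k : H) = h * (k : H) * h⁻¹)
    (K₀ : Subgroup H) (hK₀fin : (K₀ : Set H).Finite) (hK₀ne : K₀ ≠ ⊥) :
    ∃ K₁ : Subgroup H, (K₁ : Set H).Finite ∧ K₀ ≤ K₁ ∧
      Nonempty (↥K₁ ≃* ↥(alternatingGroup (Fin (2 * Nat.card ↥K₀)))) := by
  classical
  haveI : Finite ↥K₀ := hK₀fin.to_subtype
  haveI : Fintype ↥K₀ := Fintype.ofFinite _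
  obtain ⟨ι, hι⟩ := exists_injective_monoidHom_alternating (α := ↥K₀)
  obtain ⟨eH, heH⟩ := hEmb (alternatingGroup (Fin (2 * Nat.card ↥K₀)))
  let L : Subgroup H := eH.range
  have hLfin : (L : Set H).Finite := Set.finite_range eH
  let ψ : ↥K₀ →* H := eH.comp ι
  have hψ : Function.Injective ψ := heH.comp hι
  let φ : ↥K₀ ≃* ↥ψ.range := MonoidHom.ofInjective hψ
  have hK'fin : ((ψ.range : Subgroup H) : Set H).Finite := Set.finite_range ψ
  obtain ⟨h, hh⟩ := hHom ψ.range K₀ hK'fin hK₀fin φ.symm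
  refine ⟨Subgroup.map (MulAut.conj h).toMonoidHom L, ?_, ?_, ?_⟩
  · rw [Subgroup.coe_map]
    exact hLfin.image _
  · intro x hx
    have hk := hh (φ ⟨x, hx⟩)
    rw [φ.symm_apply_apply] at hk
    refine ⟨(φ ⟨x, hx⟩ : H), ?_, ?_⟩
    · obtain ⟨y, hy⟩ := (φ ⟨x, hx⟩).2
      exact ⟨ι y, hy⟩
    · simpa [MulAut.conj_apply] using hk.symm
  · exact ⟨((Subgroup.equivMapOfInjective L _ (MulAut.conj h).injective).symm.trans
      (MonoidHom.ofInjective heH).symm)⟩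
end

section
/- Let H be Hall's universal group. Then H is generated by its elements of order 2: the subgroup of H generated by the set {x ∈ H : x ≠ 1 and x² = 1} is all of H. -/
/-!
The rotation `r 1` of the dihedral group `D_n` is the product `sr 0 * sr 1` of two reflections,
and `D_n` is generated by its reflections. Given `g ∈ H` of (finite, by local finiteness) order
`n`, embed `D_n` into `H`; the cyclic subgroups generated by `g` and by the image of `r 1` are
isomorphic, hence conjugate, so `g` lies in a conjugate of the embedded `D_n`, which is again an
embedded copy of `D_n` and therefore generated by involutions of `H`.
-/

open Subgroup

def involutions (G : Type*) [Group G] : Set G := {x | x ≠ 1 ∧ x ^ 2 = 1}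

theorem mem_involutions_of_orderOf_eq_two {G : Type*} [Group G] {x : G} (hx : orderOf x = 2) :
    x ∈ involutions G :=
  ⟨fun h ↦ by simp [h] at hx, hx ▸ pow_orderOf_eq_one x⟩

theorem DihedralGroup.closure_involutions (n : ℕ) :
    closure (involutions (DihedralGroup n)) = ⊤ := by
  have hsr (i : ZMod n) : sr i ∈ closure (involutions (DihedralGroup n)) :=
    subset_closure (mem_involutions_of_orderOf_eq_two (orderOf_sr i))
  refine eq_top_iff.mpr fun x _ ↦ ?_
  cases x with
  | r i => simpa [sr_mul_sr] using mul_mem (hsr 0) (hsr i)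
  | sr i => exact hsr i

theorem MonoidHom.map_closure_involutions_le {G H : Type*} [Group G] [Group H] {f : G →* H}
    (hf : Function.Injective f) :
    (closure (involutions G)).map f ≤ closure (involutions H) := by
  rw [MonoidHom.map_closure]
  refine closure_mono ?_
  rintro _ ⟨x, ⟨hx1, hx2⟩, rfl⟩
  exact ⟨(map_ne_one_iff f hf).mpr hx1, by rw [← map_pow, hx2, map_one]⟩

theorem MonoidHom.range_le_closure_involutions {G H : Type*} [Group G] [Group H] {f : G →* H}
    (hf : Function.Injective f) (hG : closure (involutions G) = ⊤) :
    f.range ≤ closure (involutions H) := by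
  rw [MonoidHom.range_eq_map, ← hG]
  exact map_closure_involutions_le hf

theorem hall_generated_by_involutions_general
    {H : Type} [Group H]
    (hLF : ∀ s : Finset H, ((Subgroup.closure (s : Set H) : Subgroup H) : Set H).Finite)
    (hEmb : ∀ (G : Type) [Group G] [Finite G], ∃ e : G →* H, Function.Injective e)
    (hHom : ∀ K L : Subgroup H, (K : Set H).Finite → (L : Set H).Finite →
      ∀ φ : ↥K ≃* ↥L, ∃ h : H, ∀ k : K, (φ k : H) = h * (k : H) * h⁻¹) :
    Subgroup.closure {x : H | x ≠ 1 ∧ x ^ 2 = 1} = ⊤ := by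
  have hfin (x : H) : ((zpowers x : Subgroup H) : Set H).Finite := by
    simpa [zpowers_eq_closure] using hLF {x}
  refine eq_top_iff.mpr fun g _ ↦ ?_
  have : NeZero (orderOf g) := ⟨(finite_zpowers.mp (hfin g)).orderOf_pos.ne'⟩
  obtain ⟨e, he⟩ := hEmb (DihedralGroup (orderOf g))
  have hcard : Nat.card (zpowers (e (DihedralGroup.r 1))) = Nat.card (zpowers g) := by
    rw [Nat.card_zpowers, Nat.card_zpowers, orderOf_injective e he, DihedralGroup.orderOf_r_one]
  set φ := mulEquivOfCyclicCardEq hcard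
  obtain ⟨c, hc⟩ := hHom _ _ (hfin _) (hfin g) φ
  obtain ⟨k, hk⟩ := φ.surjective ⟨g, mem_zpowers g⟩
  obtain ⟨d, -, hd⟩ : (k : H) ∈ (zpowers (DihedralGroup.r 1)).map e := by
    rw [MonoidHom.map_zpowers]; exact k.2
  have hg : g = c * e d * c⁻¹ := by rw [hd, ← hc, hk]
  have hconj : Function.Injective ((MulAut.conj c).toMonoidHom.comp e) :=
    (MulAut.conj c).injective.comp he
  exact MonoidHom.range_le_closure_involutions hconj (DihedralGroup.closure_involutions _)
    ⟨d, hg.symm⟩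

/-- **Hall's universal group is generated by its involutions.**
If `H` is Hall's universal group, then the subgroup generated by the elements of order `2`
is all of `H`. -/
theorem hall_generated_by_involutions
    {H : Type} [Group H] [Countable H]
    (hLF : ∀ s : Finset H, ((Subgroup.closure (s : Set H) : Subgroup H) : Set H).Finite)
    (hEmb : ∀ (G : Type) [Group G] [Finite G], ∃ e : G →* H, Function.Injective e)
    (hHom : ∀ K L : Subgroup H, (K : Set H).Finite → (L : Set H).Finite →
      ∀ φ : ↥K ≃* ↥L, ∃ h : H, ∀ k : K, (φ k : H) = h * (k : H) * h⁻¹) :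
    Subgroup.closure {x : H | x ≠ 1 ∧ x ^ 2 = 1} = ⊤ :=
  hall_generated_by_involutions_general hLF hEmb hHom
end
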